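/- Fix 0 < p < 1, r ≥ 3, μ ≥ 0, and ε > 0. Let b = 1/(1-p), x₀ = ⌊2 log_b n − 2 log_b log_b n + 2 log_b(e/2) + 1 + ε⌋. Then the expected number of vertex subsets S of G(n,p) with |S| ≥ x₀ + 1 such that the number of edges induced by S is less than μ + (r-1)(|S| − x₀)/2 tends to 0 as n → ∞. -/

import Mathlib

open Filter Real
open scoped Classical

noncomputable def edgeCount {V : Type*} (G : SimpleGraph V) : ℕ := G.edgeSet.ncard

noncomputable def natDeg {V : Type*} (G : SimpleGraph V) (v : V) : ℕ := (G.neighborSet v).ncard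

def addEdge {V : Type*} (G : SimpleGraph V) (u v : V) : SimpleGraph V :=
  G ⊔ SimpleGraph.fromEdgeSet {s(u, v)}

def StarSatIn {V : Type*} (r : ℕ) (G H : SimpleGraph V) : Prop :=
  H ≤ G ∧ (∀ v, natDeg H v < r) ∧
  ∀ u v : V, G.Adj u v → ¬ H.Adj u v → ∃ w, r ≤ natDeg (addEdge H u v) w

noncomputable def starSat {V : Type*} (r : ℕ) (G : SimpleGraph V) : ℕ :=
  sInf { m | ∃ H : SimpleGraph V, StarSatIn r G H ∧ edgeCount H = m }

noncomputable def gnpProb (n : ℕ) (p : ℝ) (P : SimpleGraph (Fin n) → Prop) : ℝ :=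
  ∑ G : SimpleGraph (Fin n),
    if P G then p ^ edgeCount G * (1 - p) ^ (n.choose 2 - edgeCount G) else 0

noncomputable def x0 (p ε : ℝ) (n : ℕ) : ℕ :=
  (⌊2 * Real.logb (1/(1-p)) n - 2 * Real.logb (1/(1-p)) (Real.logb (1/(1-p)) n)
      + 2 * Real.logb (1/(1-p)) (Real.exp 1 / 2) + 1 + ε⌋).toNat

noncomputable def inducedEdges {n : ℕ} (G : SimpleGraph (Fin n)) (S : Finset (Fin n)) : ℕ :=
  {e | e ∈ G.edgeSet ∧ ∀ v ∈ e, v ∈ S}.ncard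

def HasHamPower (ℓ : ℕ) {V : Type*} [Fintype V] (G : SimpleGraph V) : Prop :=
  ∃ σ : ZMod (Fintype.card V) ≃ V, ∀ i : ZMod (Fintype.card V), ∀ d : ℕ, 1 ≤ d → d ≤ ℓ →
    G.Adj (σ i) (σ (i + (d : ZMod (Fintype.card V))))

def cyclePower (n ℓ : ℕ) : SimpleGraph (Fin n) where
  Adj i j := i ≠ j ∧ ∃ d : ℕ, 1 ≤ d ∧ d ≤ ℓ ∧ ((i.val + d) % n = j.val ∨ (j.val + d) % n = i.val)
  symm := ⟨fun i j ⟨h, d, h1, h2, h3⟩ => ⟨h.symm, d, h1, h2, h3.symm⟩⟩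
  loopless := ⟨fun i h => h.1 rfl⟩

def antipodal (n : ℕ) : SimpleGraph (Fin n) where
  Adj i j := i ≠ j ∧ ((i.val + n/2) % n = j.val ∨ (j.val + n/2) % n = i.val)
  symm := ⟨fun i j ⟨h, h2⟩ => ⟨h.symm, h2.symm⟩⟩
  loopless := ⟨fun i h => h.1 rfl⟩

/-!
Bound `C(n,k) ≤ (e n / k)^k` and the lower binomial tail below `t` by
`(t + 1) ((N + 1) / (1 - p))^t (1 - p)^N`, where `N = C(k,2)`. With `ℓ = log (1 / (1 - p))` the
logarithm of the `k`-th term is then at most `k (1 + log n - log k) - N ℓ + O(t log k)`.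
The choice of `x₀` gives `1 + log n - log (x₀ + 1) - x₀ ℓ / 2 ≤ -ε ℓ / 4`, which pays for the
part `k x₀ ℓ / 2` of `N ℓ`; the rest, `k (k - x₀ - 1) ℓ / 2`, dominates the contribution
`O((k - x₀) log k)` of `t = μ + (r - 1)(k - x₀) / 2`. So the `k`-th term is at most
`exp (-ε ℓ k / 8)`, and the sum is bounded by a geometric tail starting at `x₀ + 1 → ∞`.
-/

open Finset
open scoped Nat

theorem Nat.cast_choose_le_exp_mul_div_pow (n k : ℕ) :
    (n.choose k : ℝ) ≤ (exp 1 * n / k) ^ k := by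
  rcases k.eq_zero_or_pos with rfl | hk
  · simp
  have hk₀ : (0 : ℝ) < k := by exact_mod_cast hk
  calc (n.choose k : ℝ) ≤ (n : ℝ) ^ k / k ! := Nat.choose_le_pow_div k n
    _ = ((k : ℝ) ^ k / k !) * ((n : ℝ) / k) ^ k := by rw [div_pow]; field_simp
    _ ≤ exp k * ((n : ℝ) / k) ^ k := by gcongr; exact pow_div_factorial_le_exp _ hk₀.le k
    _ = (exp 1 * n / k) ^ k := by rw [mul_div_assoc, mul_pow, ← exp_nat_mul, mul_one]

theorem sum_filter_binomial_lt_le (N : ℕ) {p t : ℝ} (hp : 0 ≤ p) (hp1 : p < 1) (ht : 0 ≤ t) :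
    ∑ m ∈ (range (N + 1)).filter (fun m : ℕ => (m : ℝ) < t),
        (N.choose m : ℝ) * p ^ m * (1 - p) ^ (N - m)
      ≤ (t + 1) * (((N : ℝ) + 1) / (1 - p)) ^ t * (1 - p) ^ N := by
  set q := 1 - p
  set A := ((N : ℝ) + 1) / q
  have hq : 0 < q := by simp only [q]; linarith
  have hA : 1 ≤ A := (one_le_div hq).2 (by simp only [q]; linarith [(N.cast_nonneg : (0 : ℝ) ≤ N)])
  have hterm : ∀ m ∈ (range (N + 1)).filter (fun m : ℕ => (m : ℝ) < t),
      (N.choose m : ℝ) * p ^ m * q ^ (N - m) ≤ A ^ t * q ^ N := by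
    intro m hm
    obtain ⟨hmN, hmt⟩ : m < N + 1 ∧ (m : ℝ) < t := by simpa using hm
    have hqN : q ^ N = q ^ (N - m) * q ^ m := by rw [← pow_add, Nat.sub_add_cancel (by omega)]
    calc (N.choose m : ℝ) * p ^ m * q ^ (N - m) ≤ ((N : ℝ) + 1) ^ m * 1 * q ^ (N - m) := by
          gcongr
          · exact_mod_cast (N.choose_le_pow m).trans (Nat.pow_le_pow_left (by omega) m)
          · exact pow_le_one₀ hp hp1.le
      _ = A ^ m * q ^ N := by rw [hqN, div_pow]; field_simp
      _ ≤ A ^ t * q ^ N := by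
          gcongr
          rw [← rpow_natCast]
          exact rpow_le_rpow_of_exponent_le hA hmt.le
  have hcard : (((range (N + 1)).filter (fun m : ℕ => (m : ℝ) < t)).card : ℝ) ≤ t + 1 := by
    have hsub : (range (N + 1)).filter (fun m : ℕ => (m : ℝ) < t) ⊆ range ⌈t⌉₊ :=
      fun m hm => mem_range.2 (Nat.lt_ceil.2 (mem_filter.1 hm).2)
    calc _ ≤ ((range ⌈t⌉₊).card : ℝ) := by exact_mod_cast card_le_card hsub
      _ ≤ t + 1 := by rw [card_range]; exact (Nat.ceil_lt_add_one ht).le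
  calc _ ≤ ((range (N + 1)).filter (fun m : ℕ => (m : ℝ) < t)).card • (A ^ t * q ^ N) :=
        sum_le_card_nsmul _ _ _ hterm
    _ ≤ (t + 1) * (A ^ t * q ^ N) := by rw [nsmul_eq_mul]; gcongr
    _ = _ := by ring

theorem choose_mul_sum_filter_binomial_lt_le_exp {n k : ℕ} (hk : 0 < k) (hkn : k ≤ n)
    {p t : ℝ} (hp : 0 ≤ p) (hp1 : p < 1) (ht : 0 ≤ t) :
    (n.choose k : ℝ) * ∑ m ∈ (range (k.choose 2 + 1)).filter (fun m : ℕ => (m : ℝ) < t),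
        ((k.choose 2).choose m : ℝ) * p ^ m * (1 - p) ^ (k.choose 2 - m)
      ≤ exp (k * (1 + log n - log k) + log (t + 1)
          + t * (log ((k.choose 2 : ℝ) + 1) - log (1 - p)) + k.choose 2 * log (1 - p)) := by
  have hq : 0 < 1 - p := by linarith
  have hk₀ : (0 : ℝ) < k := by exact_mod_cast hk
  have hn₀ : (0 : ℝ) < n := by exact_mod_cast hk.trans_le hkn
  have hN : (0 : ℝ) < (k.choose 2 : ℝ) + 1 := by positivity
  have hchoose : (exp 1 * n / k) ^ k = exp (k * (1 + log n - log k)) := by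
    have hlog : log (exp 1 * n / k) = 1 + log n - log k := by
      rw [log_div (by positivity) hk₀.ne', log_mul (exp_pos 1).ne' hn₀.ne', log_exp]
    rw [← hlog, exp_nat_mul, exp_log (by positivity)]
  have hrpow : (((k.choose 2 : ℝ) + 1) / (1 - p)) ^ t
      = exp (t * (log ((k.choose 2 : ℝ) + 1) - log (1 - p))) := by
    rw [rpow_def_of_pos (div_pos hN hq), log_div hN.ne' hq.ne', mul_comm]
  have hpow : (1 - p) ^ k.choose 2 = exp (k.choose 2 * log (1 - p)) := by
    rw [exp_nat_mul, exp_log hq]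
  calc _ ≤ (exp 1 * n / k) ^ k
        * ((t + 1) * (((k.choose 2 : ℝ) + 1) / (1 - p)) ^ t * (1 - p) ^ k.choose 2) :=
        mul_le_mul (Nat.cast_choose_le_exp_mul_div_pow n k) (sum_filter_binomial_lt_le _ hp hp1 ht)
          (sum_nonneg fun m _ => by positivity) (by positivity)
    _ = _ := by
        rw [hchoose, hrpow, hpow, exp_add, exp_add, exp_add, exp_log (by linarith)]
        ring

theorem eventually_mul_log_add_le_mul (α β : ℝ) {γ : ℝ} (hγ : 0 < γ) :
    ∀ᶠ x : ℝ in atTop, α * log x + β ≤ γ * x := by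
  have h := ((isLittleO_log_id_atTop.const_mul_left α).add
    (Asymptotics.isLittleO_const_id_atTop β)).bound hγ
  filter_upwards [h, eventually_ge_atTop 0] with x hx hx₀
  rw [Real.norm_eq_abs, id, Real.norm_of_nonneg hx₀] at hx
  exact (le_abs_self _).trans hx

theorem eventually_log_add_mul_sub_le {μ a ℓ c : ℝ} (hμ : 0 ≤ μ) (ha : 0 ≤ a) (hℓ : 0 < ℓ)
    (hc : 0 < c) :
    ∀ᶠ k : ℕ in atTop, ∀ j : ℝ, 1 ≤ j → j ≤ k →
      log (μ + a * j + 1) + (μ + a * j) * (2 * log k + ℓ) - k * (j - 1) * ℓ / 2 ≤ c * k := by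
  have hslope := eventually_mul_log_add_le_mul (2 * a) (a * ℓ) (half_pos hℓ)
  have hlog := eventually_mul_log_add_le_mul (2 * (μ + a) + 1) ((μ + a) * ℓ + log (μ + a + 1)) hc
  filter_upwards [tendsto_natCast_atTop_atTop.eventually
    (hslope.and (hlog.and (eventually_ge_atTop 1)))] with k ⟨hk_slope, hk_log, hk₁⟩ j hj hjk
  have hlog_t : log (μ + a * j + 1) ≤ log (μ + a + 1) + log k := by
    rw [← log_mul (by positivity) (by positivity)]
    exact log_le_log (by positivity) (by nlinarith)
  have hj_slope := mul_le_mul_of_nonneg_left hk_slope (sub_nonneg.2 hj)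
  linarith

noncomputable def x0Arg (p ε : ℝ) (n : ℕ) : ℝ :=
  2 * Real.logb (1/(1-p)) n - 2 * Real.logb (1/(1-p)) (Real.logb (1/(1-p)) n)
      + 2 * Real.logb (1/(1-p)) (Real.exp 1 / 2) + 1 + ε

theorem x0Arg_sub_one_lt_x0 (p ε : ℝ) (n : ℕ) : x0Arg p ε n - 1 < x0 p ε n := by
  have h : (⌊x0Arg p ε n⌋ : ℝ) ≤ (x0 p ε n : ℤ) := by
    exact_mod_cast Int.self_le_toNat ⌊x0Arg p ε n⌋
  exact (Int.sub_one_lt_floor _).trans_le (by exact_mod_cast h)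

theorem x0Arg_mul_log {p : ℝ} (hp : 0 < p) (hp1 : p < 1) (ε : ℝ) (n : ℕ) :
    x0Arg p ε n * log (1 / (1 - p)) = 2 * log n - 2 * log (logb (1 / (1 - p)) n)
      + 2 * (1 - log 2) + (1 + ε) * log (1 / (1 - p)) := by
  have hℓ : log (1 / (1 - p)) ≠ 0 :=
    (log_pos ((one_lt_div (by linarith)).2 (by linarith))).ne'
  simp only [x0Arg, logb]
  rw [log_div (exp_ne_zero 1) two_ne_zero, log_exp]
  field_simp
  ring

theorem tendsto_logb_one_div_one_sub_atTop {p : ℝ} (hp : 0 < p) (hp1 : p < 1) :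
    Tendsto (fun n : ℕ => logb (1 / (1 - p)) n) atTop atTop :=
  (tendsto_logb_atTop ((one_lt_div (by linarith)).2 (by linarith))).comp
    tendsto_natCast_atTop_atTop

theorem eventually_exp_neg_mul_two_mul_logb_le_x0Arg {p ε δ : ℝ} (hp : 0 < p) (hp1 : p < 1)
    (hε : -1 ≤ ε) (hδ : 0 < δ) :
    ∀ᶠ n : ℕ in atTop, exp (-δ) * (2 * logb (1 / (1 - p)) n) ≤ x0Arg p ε n := by
  have hℓ : 0 < log (1 / (1 - p)) := log_pos ((one_lt_div (by linarith)).2 (by linarith))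
  have hc : 0 < (1 - exp (-δ)) * log (1 / (1 - p)) :=
    mul_pos (sub_pos.2 (exp_lt_one_iff.2 (neg_neg_of_pos hδ))) hℓ
  filter_upwards [(tendsto_logb_one_div_one_sub_atTop hp hp1).eventually
    ((isLittleO_log_id_atTop.bound hc).and (eventually_ge_atTop 1))] with n ⟨hlog, hL₁⟩
  set L := logb (1 / (1 - p)) n
  rw [Real.norm_of_nonneg (log_nonneg hL₁), id, Real.norm_of_nonneg (by linarith)] at hlog
  have hL : L * log (1 / (1 - p)) = log n := by simp only [L, logb]; field_simp
  have hlog2 : log 2 < 1 := by linarith [log_two_lt_d9]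
  refine le_of_mul_le_mul_right ?_ hℓ
  rw [x0Arg_mul_log hp hp1, ← hL]
  have := mul_nonneg (neg_le_iff_add_nonneg'.1 hε) hℓ.le
  linarith

theorem tendsto_x0_atTop {p ε : ℝ} (hp : 0 < p) (hp1 : p < 1) (hε : -1 ≤ ε) :
    Tendsto (x0 p ε) atTop atTop := by
  rw [← tendsto_natCast_atTop_iff (R := ℝ)]
  have hlower : Tendsto (fun n : ℕ => exp (-1) * (2 * logb (1 / (1 - p)) n) - 1) atTop atTop :=
    tendsto_atTop_add_const_right _ _
      (((tendsto_logb_one_div_one_sub_atTop hp hp1).const_mul_atTop two_pos).const_mul_atTop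
        (exp_pos _))
  refine tendsto_atTop_mono' _ ?_ hlower
  filter_upwards [eventually_exp_neg_mul_two_mul_logb_le_x0Arg hp hp1 hε one_pos] with n hn
  linarith [x0Arg_sub_one_lt_x0 p ε n]

theorem eventually_one_add_log_sub_log_x0_le {p ε : ℝ} (hp : 0 < p) (hp1 : p < 1) (hε : 0 < ε) :
    ∀ᶠ n : ℕ in atTop, 1 + log n - log (x0 p ε n + 1) - x0 p ε n * log (1 / (1 - p)) / 2
      ≤ -(ε * log (1 / (1 - p)) / 4) := by
  have hℓ : 0 < log (1 / (1 - p)) := log_pos ((one_lt_div (by linarith)).2 (by linarith))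
  filter_upwards [eventually_exp_neg_mul_two_mul_logb_le_x0Arg hp hp1 (by linarith : -1 ≤ ε)
      (by positivity : 0 < ε * log (1 / (1 - p)) / 4),
    (tendsto_logb_one_div_one_sub_atTop hp hp1).eventually_gt_atTop 0] with n hn hL
  have hx0 := x0Arg_sub_one_lt_x0 p ε n
  have hx0_mul := mul_lt_mul_of_pos_right hx0 hℓ
  rw [sub_mul, x0Arg_mul_log hp hp1] at hx0_mul
  have hlog_x0 : -(ε * log (1 / (1 - p)) / 4) + log 2 + log (logb (1 / (1 - p)) n)
      ≤ log (x0 p ε n + 1) := by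
    rw [← log_exp (-(ε * log (1 / (1 - p)) / 4)), ← log_mul (exp_pos _).ne' two_ne_zero,
      ← log_mul (by positivity) hL.ne']
    exact log_le_log (by positivity) (by rw [mul_assoc]; linarith)
  linarith

theorem log_choose_two_add_one_le {k : ℕ} (hk : 1 ≤ k) :
    log ((k.choose 2 : ℝ) + 1) ≤ 2 * log k := by
  have hk₁ : (1 : ℝ) ≤ k := by exact_mod_cast hk
  rw [show 2 * log k = log ((k : ℝ) ^ 2) by rw [log_pow]; norm_num, Nat.cast_choose_two]
  exact log_le_log (by nlinarith) (by nlinarith)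

theorem choose_mul_sum_filter_binomial_lt_le_exp_neg {p ℓ ε : ℝ} (hp : 0 ≤ p) (hp1 : p < 1)
    (hℓ : log (1 - p) = -ℓ) {μ r n k X : ℕ} (hr : 1 ≤ r) (hXk : X + 1 ≤ k) (hkn : k ≤ n)
    (hn : 1 + log n - log (X + 1) - X * ℓ / 2 ≤ -(ε * ℓ / 4))
    (hk : ∀ j : ℝ, 1 ≤ j → j ≤ k →
      log (μ + (r - 1) / 2 * j + 1) + (μ + (r - 1) / 2 * j) * (2 * log k + ℓ)
        - k * (j - 1) * ℓ / 2 ≤ ε * ℓ / 8 * k) :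
    (n.choose k : ℝ) * ∑ m ∈ (range (k.choose 2 + 1)).filter
        (fun m : ℕ => (m : ℝ) < (μ : ℝ) + ((r : ℝ) - 1) * ((k : ℝ) - (X : ℝ)) / 2),
        ((k.choose 2).choose m : ℝ) * p ^ m * (1 - p) ^ (k.choose 2 - m)
      ≤ exp (-(ε * ℓ / 8)) ^ k := by
  set t : ℝ := μ + ((r : ℝ) - 1) * ((k : ℝ) - X) / 2
  have hkX : (X : ℝ) + 1 ≤ k := by exact_mod_cast hXk
  have hr₁ : (1 : ℝ) ≤ r := by exact_mod_cast hr
  have ht : 0 ≤ t := add_nonneg μ.cast_nonneg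
    (div_nonneg (mul_nonneg (by linarith) (by linarith)) two_pos.le)
  have htail := hk (k - X) (by linarith) (by linarith [X.cast_nonneg (α := ℝ)])
  rw [show (μ : ℝ) + (r - 1) / 2 * (k - X) = t by ring] at htail
  have hlog_k : k * (1 + log n - log k) ≤ k * (X * ℓ / 2 - ε * ℓ / 4) :=
    mul_le_mul_of_nonneg_left (by linarith [log_le_log (by positivity) hkX]) k.cast_nonneg
  have hlog_N := mul_le_mul_of_nonneg_left (log_choose_two_add_one_le (by omega : 1 ≤ k)) ht
  refine (choose_mul_sum_filter_binomial_lt_le_exp (by omega) hkn hp hp1 ht).trans ?_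
  rw [Nat.cast_choose_two] at hlog_N
  -- `C(k,2) ℓ` splits as `k X ℓ / 2`, paid for by `hn`, plus `k (k - X - 1) ℓ / 2`, paid for by `hk`.
  rw [← exp_nat_mul, exp_le_exp, hℓ, Nat.cast_choose_two]
  linarith

theorem stmt7 (p : ℝ) (hp : 0 < p) (hp1 : p < 1) (r μ : ℕ) (hr : 3 ≤ r)
    (ε : ℝ) (hε : 0 < ε) :
    Tendsto (fun n : ℕ =>
        ∑ k ∈ Finset.Icc (x0 p ε n + 1) n,
          (n.choose k : ℝ) *
            ∑ m ∈ (Finset.range (k.choose 2 + 1)).filter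
                (fun m : ℕ => (m : ℝ) < (μ : ℝ) + ((r : ℝ) - 1) * ((k : ℝ) - (x0 p ε n : ℝ)) / 2),
              ((k.choose 2).choose m : ℝ) * p ^ m * (1 - p) ^ (k.choose 2 - m))
      atTop (nhds 0) := by
  set ℓ := log (1 / (1 - p)) with hℓ_def
  have hℓ : 0 < ℓ := log_pos ((one_lt_div (by linarith)).2 (by linarith))
  have hlog : log (1 - p) = -ℓ := by rw [hℓ_def, one_div, log_inv, neg_neg]
  set ρ := exp (-(ε * ℓ / 8))
  have hρ : ρ < 1 := exp_lt_one_iff.2 (neg_neg_of_pos (by positivity))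
  have ha : (0 : ℝ) ≤ ((r : ℝ) - 1) / 2 := by
    have : (1 : ℝ) ≤ r := by exact_mod_cast (by omega : 1 ≤ r)
    linarith
  obtain ⟨K, hK⟩ := eventually_atTop.1
    (eventually_log_add_mul_sub_le μ.cast_nonneg ha hℓ (by positivity : 0 < ε * ℓ / 8))
  have hx0 := tendsto_x0_atTop hp hp1 (by linarith : -1 ≤ ε)
  refine squeeze_zero' (g := fun n => ρ ^ (x0 p ε n + 1) / (1 - ρ)) ?_ ?_ ?_
  · have := sub_nonneg.2 hp1.le
    exact Eventually.of_forall fun n => sum_nonneg fun k _ =>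
      mul_nonneg (Nat.cast_nonneg _) (sum_nonneg fun m _ => by positivity)
  · filter_upwards [eventually_one_add_log_sub_log_x0_le hp hp1 hε, hx0.eventually_ge_atTop K]
      with n hn hKn
    calc _ ≤ ∑ k ∈ Ico (x0 p ε n + 1) (n + 1), ρ ^ k := by
          rw [Ico_add_one_right_eq_Icc]
          refine sum_le_sum fun k hk => ?_
          obtain ⟨hXk, hkn⟩ := mem_Icc.1 hk
          exact choose_mul_sum_filter_binomial_lt_le_exp_neg hp.le hp1 hlog (by omega) hXk hkn hn
            (hK k (by omega))
      _ ≤ _ := geom_sum_Ico_le_of_lt_one (exp_pos _).le hρ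
  · simpa using ((tendsto_pow_atTop_nhds_zero_of_lt_one (exp_pos _).le hρ).comp
      ((tendsto_add_atTop_nat 1).comp hx0)).div_const (1 - ρ)
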